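/- Let D be the open modular triangle for Γ = PSL₂(ℤ), let γ be a Jordan curve with trace contained in D, let T denote the translation z ↦ z + 1, and set F = (D ∩ ext γ) ∪ T(int γ). Then F is open, no two distinct points of F are Γ-equivalent, and every point of ℍ has a Γ-translate in the closure of F. -/

import Mathlib

open Bornology

/-- The Möbius action of `SL₂(ℤ)` (factoring through `PSL₂(ℤ)`) on points of `ℂ`. -/
noncomputable def mobius (g : Matrix.SpecialLinearGroup (Fin 2) ℤ) (z : ℂ) : ℂ :=
  (((g 0 0 : ℤ) : ℂ) * z + ((g 0 1 : ℤ) : ℂ)) / (((g 1 0 : ℤ) : ℂ) * z + ((g 1 1 : ℤ) : ℂ))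

/-- The open modular triangle. -/
def modularTriangle : Set ℂ :=
  {z : ℂ | 0 < z.im ∧ |z.re| < 1 / 2 ∧ 1 < ‖z‖}

/-!
Since the curve lies in `D`, the complement of `D` is a connected unbounded set missing the
curve, so it lies in the exterior, and the interior of the curve lies in `D`. Hence `F` arises
from a subset of `D` by moving the points of `int γ` within their orbits (by `T`); as `D` meets
every orbit at most once, so does `F`. For the covering property, a point of `closure D` outside
`int γ` lies in `closure (ext γ)`, because the curve is the frontier of the exterior, and so in
`closure (D ∩ ext γ)`; a point of `int γ` is moved into `F` by `T`.
-/

open UpperHalfPlane ModularGroup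
open scoped MatrixGroups Modular Pointwise

section

variable {α : Type*} [TopologicalSpace α]

theorem IsPreconnected.subset_of_not_isBounded [Bornology α] {S I E : Set α}
    (hS : IsPreconnected S) (hSb : ¬IsBounded S) (hI : IsOpen I) (hE : IsOpen E)
    (hIE : Disjoint I E) (hIb : IsBounded I) (hSIE : S ⊆ I ∪ E) : S ⊆ E :=
  (hS.subset_or_subset hI hE hIE hSIE).resolve_left fun h ↦ hSb (hIb.subset h)

theorem compl_subset_closure_of_subset_frontier {K I E : Set α} (hIE : Kᶜ ⊆ I ∪ E)
    (hK : K ⊆ frontier E) : Iᶜ ⊆ closure E := by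
  intro x hxI
  by_cases hxK : x ∈ K
  · exact frontier_subset_closure (hK hxK)
  · exact subset_closure ((hIE hxK).resolve_left hxI)

theorem closure_subset_closure_inter_union_of_compl_subset {s t u : Set α} (hs : IsOpen s)
    (ht : IsOpen t) (hst : sᶜ ⊆ t) (hu : uᶜ ⊆ closure t) : closure s ⊆ closure (s ∩ t) ∪ u := by
  intro x hxs
  by_cases hxu : x ∈ u
  · exact .inr hxu
  refine .inl ?_
  by_cases hx : x ∈ s
  · exact hs.inter_closure ⟨hx, hu hxu⟩
  · exact Set.inter_comm t s ▸ ht.inter_closure ⟨hst hx, hxs⟩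

end

def MeetsOrbitsAtMostOnce (G : Type*) {X : Type*} [SMul G X] (S : Set X) : Prop :=
  ∀ x ∈ S, ∀ g : G, g • x ∈ S → g • x = x

namespace MeetsOrbitsAtMostOnce

variable {G X : Type*} [Group G] [MulAction G X] {S : Set X}

theorem mono {R : Set X} (hS : MeetsOrbitsAtMostOnce G S) (hRS : R ⊆ S) :
    MeetsOrbitsAtMostOnce G R :=
  fun x hx g hgx ↦ hS x (hRS hx) g (hRS hgx)

theorem image_smul_self (hS : MeetsOrbitsAtMostOnce G S) (k : X → G) :
    MeetsOrbitsAtMostOnce G ((fun x ↦ k x • x) '' S) := by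
  rintro _ ⟨x, hx, rfl⟩ g ⟨y, hy, hxy⟩
  have hyx : ((k y)⁻¹ * g * k x) • x = y := by rw [mul_smul, mul_smul, ← hxy, inv_smul_smul]
  obtain rfl : y = x := hyx.symm.trans (hS x hx _ (hyx.symm ▸ hy))
  exact hxy.symm

theorem union_smul {A B : Set X} (hS : MeetsOrbitsAtMostOnce G S) (hA : A ⊆ S) (hB : B ⊆ S)
    (hAB : Disjoint A B) (h : G) : MeetsOrbitsAtMostOnce G (A ∪ h • B) := by
  classical
  have hk : (fun x ↦ (if x ∈ A then 1 else h) • x) '' (A ∪ B) = A ∪ h • B := by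
    rw [Set.image_union, ← Set.image_smul]
    congr 1
    · exact (Set.image_congr fun x hx ↦ by simp [hx]).trans (Set.image_id' A)
    · exact Set.image_congr fun x hx ↦ by simp [hAB.notMem_of_mem_right hx]
  exact hk ▸ (hS.mono (Set.union_subset hA hB)).image_smul_self _

end MeetsOrbitsAtMostOnce

theorem mobius_coe (g : SL(2, ℤ)) (z : ℍ) : mobius g z = ↑(g • z) := by
  rw [coe_specialLinearGroup_apply]
  simp [mobius]

theorem coe_T_smul (z : ℍ) : ↑(T • z) = (z : ℂ) + 1 := by
  simpa using coe_T_zpow_smul_eq z (n := 1)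

theorem MeetsOrbitsAtMostOnce.eq_of_mobius_eq {S : Set ℍ}
    (hS : MeetsOrbitsAtMostOnce SL(2, ℤ) S) {z w : ℂ} (hz : z ∈ (↑) '' S) (hw : w ∈ (↑) '' S)
    {g : SL(2, ℤ)} (hg : mobius g z = w) : z = w := by
  obtain ⟨z, hz, rfl⟩ := hz
  obtain ⟨w, hw, rfl⟩ := hw
  obtain rfl : g • z = w := coe_injective (by rw [← mobius_coe, hg])
  exact congrArg _ (hS z hz g hw).symm

theorem meetsOrbitsAtMostOnce_fdo : MeetsOrbitsAtMostOnce SL(2, ℤ) 𝒟ᵒ :=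
  fun _ hz _ hgz ↦ (eq_smul_self_of_mem_fdo_mem_fdo hz hgz).symm

theorem image_coe_T_smul (A : Set ℍ) : (↑) '' (T • A) = (· + 1) '' ((↑) '' A : Set ℂ) := by
  simp only [← Set.image_smul, Set.image_image, coe_T_smul]

theorem modularTriangle_eq_image_coe_fdo : modularTriangle = (↑) '' 𝒟ᵒ := by
  rw [coe_fdo]
  ext z
  simp only [modularTriangle, Set.mem_ofPred_eq]
  tauto

theorem isOpen_modularTriangle : IsOpen modularTriangle :=
  modularTriangle_eq_image_coe_fdo ▸ isOpenEmbedding_coe.isOpenMap _ isOpen_fdo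

theorem image_coe_fd_subset_closure_modularTriangle : (↑) '' 𝒟 ⊆ closure modularTriangle :=
  modularTriangle_eq_image_coe_fdo ▸ fd_eq_closure_fdo ▸
    image_closure_subset_closure_image continuous_coe

theorem isPreconnected_compl_modularTriangle : IsPreconnected modularTriangleᶜ := by
  have h := ((((convex_halfSpace_im_le 0).isPreconnected.union 0 (by simp)
    (Metric.mem_closedBall_self zero_le_one) (convex_closedBall (0 : ℂ) 1).isPreconnected).union
    1 (by simp) (by norm_num) (convex_halfSpace_re_ge (1 / 2)).isPreconnected).union
    (-1) (by simp) (by norm_num) (convex_halfSpace_re_le (-(1 / 2))).isPreconnected)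
  convert h using 1
  ext z
  simp only [modularTriangle, Set.mem_compl_iff, Set.mem_ofPred_eq, Set.mem_union,
    Metric.mem_closedBall, dist_zero_right, abs_lt, not_and_or, not_lt]
  constructor <;> intro <;> grind

theorem not_isBounded_compl_modularTriangle : ¬IsBounded modularTriangleᶜ := fun h ↦ by
  obtain ⟨C, hC⟩ := isBounded_iff_forall_norm_le.1 h
  have := hC ((C + 1 : ℝ) : ℂ) (by simp [modularTriangle])
  rw [Complex.norm_real, Real.norm_eq_abs] at this
  linarith [le_abs_self (C + 1)]

theorem example2_fundamental_domain_conditions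
    (K I E : Set ℂ) (hKD : K ⊆ modularTriangle)
    (hIo : IsOpen I) (hEo : IsOpen E)
    (hIb : IsBounded I) (hdisj : Disjoint I E) (hIE : I ∪ E = Kᶜ)
    (hfE : frontier E = K)
    (F : Set ℂ) (hF : F = (modularTriangle ∩ E) ∪ (fun z => z + 1) '' I) :
    IsOpen F ∧
    (∀ z ∈ F, ∀ w ∈ F, (∃ g : Matrix.SpecialLinearGroup (Fin 2) ℤ, mobius g z = w) → z = w) ∧
    (∀ z : ℂ, 0 < z.im → ∃ g : Matrix.SpecialLinearGroup (Fin 2) ℤ, mobius g z ∈ closure F) := by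
  have hDE : modularTriangleᶜ ⊆ E :=
    isPreconnected_compl_modularTriangle.subset_of_not_isBounded
      not_isBounded_compl_modularTriangle hIo hEo hdisj hIb (hIE ▸ Set.compl_subset_compl.2 hKD)
  have hID : I ⊆ (↑) '' 𝒟ᵒ :=
    modularTriangle_eq_image_coe_fdo ▸ hdisj.subset_compl_right.trans (Set.compl_subset_comm.1 hDE)
  have hF' : F = (↑) '' (𝒟ᵒ ∩ (↑) ⁻¹' E ∪ T • (↑) ⁻¹' I) := by
    rw [hF, Set.image_union, Set.image_inter_preimage, image_coe_T_smul,
      ← modularTriangle_eq_image_coe_fdo,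
      Set.image_preimage_eq_of_subset (hID.trans (Set.image_subset_range _ _))]
  refine ⟨hF ▸ (isOpen_modularTriangle.inter hEo).union (isOpenMap_add_right 1 I hIo), ?_, ?_⟩
  · rintro z hz w hw ⟨g, hg⟩
    have hIfdo : (↑) ⁻¹' I ⊆ 𝒟ᵒ := fun x hx ↦ by
      simpa [coe_injective.mem_set_image] using hID hx
    exact (meetsOrbitsAtMostOnce_fdo.union_smul Set.inter_subset_left hIfdo
      ((hdisj.preimage _).symm.mono_left Set.inter_subset_right) T).eq_of_mobius_eq
      (hF' ▸ hz) (hF' ▸ hw) hg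
  · intro z hz
    lift z to ℍ using hz
    obtain ⟨g, hg⟩ := exists_smul_mem_fd z
    rcases closure_subset_closure_inter_union_of_compl_subset isOpen_modularTriangle hEo hDE
      (compl_subset_closure_of_subset_frontier hIE.ge hfE.ge)
      (image_coe_fd_subset_closure_modularTriangle ⟨_, hg, rfl⟩) with h | h
    · exact ⟨g, mobius_coe g z ▸ closure_mono (hF ▸ Set.subset_union_left) h⟩
    · refine ⟨T * g, subset_closure (hF ▸ Or.inr ⟨_, h, ?_⟩)⟩
      rw [mobius_coe, mul_smul, coe_T_smul]
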